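/- Let n ≥ 2, let w_i := 2^{−i}/(1 − 2^{−n}) for 1 ≤ i ≤ n, and let π be the probability distribution on permutations of {1,…,n} given by π(x) = z^{−1} ∏_{i=1}^n w_{x_i}^{n−i}, where z is the normalizing constant. Then the π-probability of the event that label n−1 appears in an earlier position than label n is at least 1/2, and it is strictly greater than 1/2 for all n ≥ 3. -/

import Mathlib

open Finset

/-- The Hendricks stationary weight `∏_{i=1}^n w_{x_i}^{n-i}` (0-based exponent
`n - 1 - i`), where `x i` is the entry in position `i`. -/
noncomputable def wProd (n : ℕ) (w : Fin n → ℝ) (x : Equiv.Perm (Fin n)) : ℝ :=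
  ∏ i : Fin n, w (x i) ^ (n - 1 - (i : ℕ))

/-- The geometric weights `w_i = 2^{-i}/(1 - 2^{-n})` (labels `1, ..., n`; 0-based label
`i` corresponds to `2^{-(i+1)}`). -/
noncomputable def geomW (n : ℕ) (i : Fin n) : ℝ :=
  ((2 : ℝ) ^ ((i : ℕ) + 1))⁻¹ / (1 - ((2 : ℝ) ^ n)⁻¹)

/-!
A bijection `e` exchanging an event `p` with its complement and strictly decreasing a
nonnegative weight on `p` shows that `p` carries more than half of the total weight. For the
Hendricks weights take `e x = swap a b * x`, which exchanges the positions of the labels `a`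
and `b`: if `a` comes first and `w b < w a`, the swap moves the larger exponent from `w a` to
`w b`, which lowers the weight. Geometric weights are strictly decreasing in the label.
-/

theorem half_lt_sum_filter_div_sum {α : Type*} [Fintype α] [Nonempty α] (f : α → ℝ)
    (p : α → Prop) [DecidablePred p] (e : α ≃ α) (hf : ∀ x, 0 ≤ f x)
    (he : ∀ x, p (e x) ↔ ¬ p x) (hfe : ∀ x, p x → f (e x) < f x) :
    1 / 2 < (∑ x ∈ univ.filter p, f x) / ∑ x, f x := by
  have hcompl : ∑ x ∈ univ.filter p, f (e x) = ∑ x ∈ univ.filter (¬ p ·), f x :=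
    sum_equiv e (fun x => by simp [he]) (fun _ _ => rfl)
  have hne : (univ.filter p).Nonempty := by
    obtain ⟨x⟩ := ‹Nonempty α›
    by_cases hx : p x
    · exact ⟨x, by simpa using hx⟩
    · exact ⟨e x, by simpa [he] using hx⟩
  have hlt : ∑ x ∈ univ.filter (¬ p ·), f x < ∑ x ∈ univ.filter p, f x :=
    hcompl ▸ sum_lt_sum_of_nonempty hne fun x hx => hfe x (mem_filter.mp hx).2
  have hcompl_nonneg : 0 ≤ ∑ x ∈ univ.filter (¬ p ·), f x := sum_nonneg fun x _ => hf x
  have htotal := sum_filter_add_sum_filter_not univ p f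
  rw [lt_div_iff₀ (by linarith), ← htotal]
  linarith

theorem Finset.prod_lt_prod_of_eq_off_pair {ι : Type*} [Fintype ι] [DecidableEq ι]
    {f g : ι → ℝ} {a b : ι} (hab : a ≠ b) (hg : ∀ i, 0 < g i)
    (heq : ∀ i, i ≠ a → i ≠ b → f i = g i) (hlt : f a * f b < g a * g b) :
    ∏ i, f i < ∏ i, g i := by
  rw [← prod_sdiff (subset_univ {a, b}), ← prod_sdiff (subset_univ {a, b}),
    prod_pair hab, prod_pair hab]
  have hrest : ∏ i ∈ univ \ {a, b}, f i = ∏ i ∈ univ \ {a, b}, g i :=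
    prod_congr rfl fun i hi => by
      simp only [mem_sdiff, mem_insert, mem_singleton, not_or] at hi
      exact heq i hi.2.1 hi.2.2
  rw [hrest]
  exact mul_lt_mul_of_pos_left hlt (prod_pos fun i _ => hg i)

theorem pow_mul_pow_lt_pow_mul_pow {α β : ℝ} {u v : ℕ} (hβ : 0 < β) (hβα : β < α)
    (huv : u < v) : α ^ u * β ^ v < α ^ v * β ^ u := by
  obtain ⟨d, rfl⟩ := Nat.exists_eq_add_of_lt huv
  have hpow : β ^ (d + 1) < α ^ (d + 1) := pow_lt_pow_left₀ hβα hβ.le (Nat.succ_ne_zero d)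
  have hpos : 0 < α ^ u * β ^ u := mul_pos (pow_pos (hβ.trans hβα) u) (pow_pos hβ u)
  calc α ^ u * β ^ (u + d + 1) = (α ^ u * β ^ u) * β ^ (d + 1) := by ring
    _ < (α ^ u * β ^ u) * α ^ (d + 1) := mul_lt_mul_of_pos_left hpow hpos
    _ = α ^ (u + d + 1) * β ^ u := by ring

theorem wProd_eq_prod_symm {n : ℕ} (w : Fin n → ℝ) (x : Equiv.Perm (Fin n)) :
    wProd n w x = ∏ j : Fin n, w j ^ (n - 1 - (x.symm j : ℕ)) :=
  Fintype.prod_equiv x _ _ fun i => by simp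

theorem wProd_pos {n : ℕ} {w : Fin n → ℝ} (hw : ∀ i, 0 < w i) (x : Equiv.Perm (Fin n)) :
    0 < wProd n w x :=
  prod_pos fun _ _ => pow_pos (hw _) _

theorem wProd_swap_mul_lt {n : ℕ} {w : Fin n → ℝ} (hw : ∀ i, 0 < w i) {a b : Fin n}
    (hab : a ≠ b) (hwab : w b < w a) {x : Equiv.Perm (Fin n)} (hx : x.symm a < x.symm b) :
    wProd n w (Equiv.swap a b * x) < wProd n w x := by
  rw [wProd_eq_prod_symm, wProd_eq_prod_symm]
  refine prod_lt_prod_of_eq_off_pair hab (fun i => pow_pos (hw i) _) (fun i hia hib => ?_) ?_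
  · simp [Equiv.Perm.mul_def, Equiv.swap_apply_of_ne_of_ne hia hib]
  · have hb : (x.symm b : ℕ) < n := (x.symm b).2
    have hx' : (x.symm a : ℕ) < x.symm b := hx
    simpa [Equiv.Perm.mul_def] using pow_mul_pow_lt_pow_mul_pow (hw b) hwab (by omega)

theorem half_lt_wProd_filter_div_sum {n : ℕ} {w : Fin n → ℝ} (hw : ∀ i, 0 < w i) {a b : Fin n}
    (hab : a ≠ b) (hwab : w b < w a) :
    1 / 2 < (∑ x ∈ univ.filter (fun x : Equiv.Perm (Fin n) => x.symm a < x.symm b),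
        wProd n w x) / ∑ x, wProd n w x := by
  refine half_lt_sum_filter_div_sum _ _ (Equiv.mulLeft (Equiv.swap a b))
    (fun x => (wProd_pos hw x).le) (fun x => ?_) (fun x hx => wProd_swap_mul_lt hw hab hwab hx)
  have hne : x.symm a ≠ x.symm b := x.symm.injective.ne hab
  simp only [Equiv.coe_mulLeft, Equiv.Perm.mul_def, Equiv.symm_trans_apply, Equiv.symm_swap,
    Equiv.swap_apply_left, Equiv.swap_apply_right]
  exact ⟨fun h => not_lt.mpr h.le, fun h => lt_of_le_of_ne (not_lt.mp h) hne.symm⟩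

theorem geomW_pos {n : ℕ} (i : Fin n) : 0 < geomW n i := by
  have : ((2 : ℝ) ^ n)⁻¹ < 1 := inv_lt_one_of_one_lt₀ (one_lt_pow₀ one_lt_two i.pos.ne')
  exact div_pos (by positivity) (by linarith)

theorem geomW_strictAnti (n : ℕ) : StrictAnti (geomW n) := by
  intro i j hij
  have : ((2 : ℝ) ^ n)⁻¹ < 1 := inv_lt_one_of_one_lt₀ (one_lt_pow₀ one_lt_two i.pos.ne')
  refine div_lt_div_of_pos_right ?_ (by linarith)
  exact inv_strictAnti₀ (by positivity) (pow_lt_pow_right₀ one_lt_two (by simpa using hij))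

/-- for the geometric weights, under the Hendricks distribution
`π(x) ∝ ∏_i w_{x_i}^{n-i}`, the probability that label `n-1` appears in an earlier
position than label `n` is at least `1/2`, and strictly greater than `1/2` if `n ≥ 3`. -/
theorem geometric_weights_order (n : ℕ) (hn : 2 ≤ n) :
    1 / 2 ≤
      (∑ x ∈ Finset.univ.filter (fun x : Equiv.Perm (Fin n) =>
          x.symm ⟨n - 2, by omega⟩ < x.symm ⟨n - 1, by omega⟩), wProd n (geomW n) x) /
        (∑ x : Equiv.Perm (Fin n), wProd n (geomW n) x) ∧
    (3 ≤ n →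
      1 / 2 <
        (∑ x ∈ Finset.univ.filter (fun x : Equiv.Perm (Fin n) =>
            x.symm ⟨n - 2, by omega⟩ < x.symm ⟨n - 1, by omega⟩), wProd n (geomW n) x) /
          (∑ x : Equiv.Perm (Fin n), wProd n (geomW n) x)) := by
  have hlt : (⟨n - 2, by omega⟩ : Fin n) < ⟨n - 1, by omega⟩ := Fin.mk_lt_mk.mpr (by omega)
  have key := half_lt_wProd_filter_div_sum geomW_pos hlt.ne (geomW_strictAnti n hlt)
  exact ⟨key.le, fun _ => key⟩
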